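/- arXiv:2602.03162 — 7 statements merged into one kernel-verified Lean document; each statement's English description precedes it below -/
import Mathlib

section
/- Let k ≥ 1 and n ≥ k be natural numbers. Let a_j denote the j-th coefficient of the formal power series A_k(q) = (1-q^k)^k · (∏_{m=1}^k (1-q^m))⁻¹ over ℤ. Then the number of partitions of n into exactly k parts satisfies p_k(n) = ∑_{m=0}^{⌊(n-k)/k⌋} a_{(n-k)-mk} · C(m+k-1, k-1), where C denotes the binomial coefficient. -/
/-!
Write `F_k = ∑ₙ p_k(n + k) qⁿ`. Deleting a part equal to `1`, or subtracting `1` from every part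
when there is none, gives `p_{k+1}(n + k + 1) = p_k(n + k) + p_{k+1}(n)`, that is
`F_{k+1} (1 - q^{k+1}) = F_k`; with `F_0 = 1` this shows `F_k = ∏_{m=1}^k (1 - q^m)⁻¹`.
Hence `F_k = A_k · (1 - q^k)^{-k}`, and `(1 - q^k)^{-k} = ∑ₘ C(m + k - 1, k - 1) q^{mk}` is
`(1 - q)^{-k}` with `q` replaced by `q^k`; comparing coefficients of `q^{n-k}` gives the formula.
-/

/-- `p_k(n)`: the number of partitions of `n` into exactly `k` (positive) parts. -/
def partitionsExact (n k : ℕ) : ℕ :=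
  Fintype.card {p : n.Partition // p.parts.card = k}

/-- The spectral operator `A_k(q) = (1-q^k)^k · (∏_{m=1}^k (1-q^m))⁻¹` in `ℤ⟦q⟧`,
where the inverse is taken via `invOfUnit` (the constant term of the product is `1`). -/
noncomputable def spectralA (k : ℕ) : PowerSeries ℤ :=
  (1 - (PowerSeries.X : PowerSeries ℤ) ^ k) ^ k *
    PowerSeries.invOfUnit (∏ m ∈ Finset.Icc 1 k, (1 - (PowerSeries.X : PowerSeries ℤ) ^ m)) 1

open PowerSeries Finset

theorem Multiset.map_add_one_map_sub_one {s : Multiset ℕ} (hs : ∀ i ∈ s, 0 < i) :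
    (s.map (· - 1)).map (· + 1) = s := by
  rw [Multiset.map_map]
  exact (Multiset.map_congr rfl fun i hi => Nat.sub_add_cancel (hs i hi)).trans (Multiset.map_id _)

theorem partitionsExact_zero_right (n : ℕ) : partitionsExact n 0 = if n = 0 then 1 else 0 := by
  split_ifs with hn
  · subst hn
    simp [partitionsExact]
  · rw [partitionsExact, Fintype.card_eq_zero_iff]
    refine ⟨fun ⟨p, hp⟩ => hn ?_⟩
    rw [Multiset.card_eq_zero] at hp
    simpa [hp] using p.parts_sum.symm

theorem partitionsExact_eq_zero_of_lt {n k : ℕ} (h : n < k) : partitionsExact n k = 0 := by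
  rw [partitionsExact, Fintype.card_eq_zero_iff]
  refine ⟨fun ⟨p, hp⟩ => h.not_ge ?_⟩
  simpa [hp, p.parts_sum] using Multiset.card_nsmul_le_sum (a := 1) fun i hi => p.parts_pos hi

theorem card_partitionsExact_one_mem (n k : ℕ) :
    Fintype.card {p : {p : (n + 1).Partition // p.parts.card = k + 1} // 1 ∈ p.1.parts} =
      partitionsExact n k :=
  Fintype.card_congr <| (Equiv.subtypeSubtypeEquivSubtypeInter _ _).trans <|
    (Equiv.subtypeEquivRight fun _ => and_comm).trans <|
    (Equiv.subtypeSubtypeEquivSubtypeInter _ _).symm.trans <|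
    Equiv.subtypeEquiv (Nat.Partition.partitionWithPartEquiv le_rfl (by omega)) fun p => by
      have := Multiset.card_pos_iff_exists_mem.2 ⟨1, p.2⟩
      rw [Nat.Partition.partitionWithPartEquiv_apply_parts, Multiset.card_erase_of_mem p.2,
        Nat.pred_eq_sub_one]
      omega

def partitionsExactEquivOneNotMem (n k : ℕ) :
    {p : n.Partition // p.parts.card = k} ≃
      {p : {p : (n + k).Partition // p.parts.card = k} // 1 ∉ p.1.parts} where
  toFun q :=
    ⟨⟨⟨q.1.parts.map (· + 1), by simp, by simp [Multiset.sum_map_add, q.1.parts_sum, q.2]⟩,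
      by simp [q.2]⟩, by simpa using fun h => (q.1.parts_pos h).ne rfl⟩
  invFun p :=
    have hpos : ∀ i ∈ p.1.1.parts, 0 < i := fun _ => p.1.1.parts_pos
    ⟨⟨p.1.1.parts.map (· - 1),
      by
        simp only [Multiset.mem_map]
        rintro _ ⟨j, hj, rfl⟩
        have : j ≠ 1 := fun h => p.2 (h ▸ hj)
        have := hpos j hj
        omega,
      by
        have := congrArg Multiset.sum (Multiset.map_add_one_map_sub_one hpos)
        simp only [Multiset.sum_map_add, p.1.1.parts_sum] at this
        simpa [p.1.2] using this⟩,
      by simp [p.1.2]⟩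
  left_inv q := by ext : 2; simp [Multiset.map_map]
  right_inv p := by ext : 3; exact Multiset.map_add_one_map_sub_one fun _ => p.1.1.parts_pos

theorem partitionsExact_add_add_one (n k : ℕ) :
    partitionsExact (n + k + 1) (k + 1) =
      partitionsExact (n + k) k + partitionsExact n (k + 1) := by
  rw [partitionsExact, ← Fintype.card_congr (Equiv.sumCompl fun p => 1 ∈ p.1.parts),
    Fintype.card_sum, card_partitionsExact_one_mem]
  exact congrArg _ (Fintype.card_congr (partitionsExactEquivOneNotMem n (k + 1))).symm

section
variable (R : Type*) [CommRing R]

noncomputable def partitionsExactSeries (k : ℕ) : R⟦X⟧ :=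
  mk fun n => (partitionsExact (n + k) k : R)

theorem partitionsExactSeries_zero : partitionsExactSeries R 0 = 1 := by
  ext n
  simp [partitionsExactSeries, partitionsExact_zero_right, coeff_one]

theorem partitionsExactSeries_succ_mul (k : ℕ) :
    partitionsExactSeries R (k + 1) * (1 - X ^ (k + 1)) = partitionsExactSeries R k := by
  ext n
  rw [mul_sub, mul_one, map_sub, mul_comm, coeff_X_pow_mul', partitionsExactSeries,
    partitionsExactSeries, coeff_mk, coeff_mk, ← add_assoc, partitionsExact_add_add_one]
  split_ifs with h
  · rw [coeff_mk, Nat.sub_add_cancel h]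
    push_cast
    ring
  · rw [partitionsExact_eq_zero_of_lt (n := n) (k := k + 1) (by omega)]
    simp

theorem partitionsExactSeries_mul_prod_one_sub_X_pow (k : ℕ) :
    partitionsExactSeries R k * ∏ m ∈ Icc 1 k, (1 - X ^ m) = 1 := by
  induction k with
  | zero => simp [partitionsExactSeries_zero]
  | succ k ih =>
    rw [prod_Icc_succ_top (by omega), mul_comm _ (1 - X ^ (k + 1)), ← mul_assoc,
      partitionsExactSeries_succ_mul, ih]

theorem partitionsExactSeries_eq_invOfUnit (k : ℕ) :
    partitionsExactSeries R k = invOfUnit (∏ m ∈ Icc 1 k, (1 - X ^ m)) 1 :=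
  left_inv_eq_right_inv (partitionsExactSeries_mul_prod_one_sub_X_pow R k) <|
    mul_invOfUnit _ _ <| by
      simp only [map_prod, map_sub, map_one, map_pow, constantCoeff_X, Units.val_one]
      exact prod_eq_one fun m hm => by rw [zero_pow (by grind), sub_zero]

end

section
variable {R : Type*} [CommRing R]

theorem coeff_mul_expand (k : ℕ) (hk : k ≠ 0) (f g : R⟦X⟧) (n : ℕ) :
    coeff n (f * expand k hk g) = ∑ m ∈ range (n / k + 1), coeff (n - m * k) f * coeff m g := by
  have hdiv (m : ℕ) : m < n / k + 1 ↔ m * k ≤ n := by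
    rw [Nat.lt_add_one_iff, Nat.le_div_iff_mul_le (Nat.pos_of_ne_zero hk)]
  rw [coeff_mul]
  symm
  refine sum_of_injOn (fun m => (n - m * k, m * k)) ?_ ?_ ?_ ?_
  · intro a _ b _ h
    simpa [hk] using congrArg Prod.snd h
  · intro m hm
    simp only [mem_coe, mem_range, hdiv, HasAntidiagonal.mem_antidiagonal] at hm ⊢
    omega
  · rintro ⟨i, j⟩ hij hnot
    simp only [HasAntidiagonal.mem_antidiagonal] at hij
    rw [coeff_expand, if_neg, mul_zero]
    rintro ⟨m, rfl⟩
    rw [mul_comm k m] at hij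
    refine hnot ⟨m, ?_, ?_⟩
    · simp only [mem_coe, mem_range, hdiv]
      omega
    · simp only [Prod.mk.injEq, mul_comm k m, and_true]
      omega
  · intro m _
    simp [mul_comm m k]

theorem one_sub_X_pow_pow_mul_expand_invOneSubPow (k d : ℕ) (hk : k ≠ 0) :
    (1 - X ^ k : R⟦X⟧) ^ d * expand k hk (invOneSubPow R d).val = 1 := by
  rw [← expand_X k hk, ← map_one (expand k hk), ← map_sub, ← map_pow, ← map_mul,
    ← invOneSubPow_inv_eq_one_sub_pow, Units.inv_eq_val_inv, Units.inv_mul, map_one]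

end

theorem stmt0 (k n : ℕ) (hk : 1 ≤ k) (hn : k ≤ n) :
    (partitionsExact n k : ℤ) =
      ∑ m ∈ Finset.range ((n - k) / k + 1),
        (PowerSeries.coeff (R := ℤ) ((n - k) - m * k)) (spectralA k) *
          (Nat.choose (m + k - 1) (k - 1) : ℤ) := by
  obtain ⟨N, rfl⟩ := Nat.exists_eq_add_of_le' hn
  have hk0 : k ≠ 0 := by omega
  have key : partitionsExactSeries ℤ k = spectralA k * expand k hk0 (invOneSubPow ℤ k).val := by
    rw [spectralA, partitionsExactSeries_eq_invOfUnit, mul_right_comm,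
      one_sub_X_pow_pow_mul_expand_invOneSubPow, one_mul]
  have hcoeff := congrArg (coeff N) key
  rw [partitionsExactSeries, coeff_mk, coeff_mul_expand] at hcoeff
  rw [hcoeff, Nat.add_sub_cancel]
  refine sum_congr rfl fun m _ => ?_
  rw [invOneSubPow_val_eq_mk_sub_one_add_choose_of_pos _ _ (by omega), coeff_mk, add_comm (k - 1),
    Nat.add_sub_assoc hk]
end

section
/- Let k ≥ 1 and d ≥ 1 be natural numbers, and let Φ_d denote the d-th cyclotomic polynomial over ℚ. Then the multiplicity of Φ_d in the polynomial ∏_{m=1}^k (X^m - 1) is exactly ⌊k/d⌋ (i.e., Φ_d^{⌊k/d⌋} divides the product but Φ_d^{⌊k/d⌋+1} does not), and the multiplicity of Φ_d in (X^k - 1)^k is k if d divides k and 0 otherwise. Consequently the net multiplicity of Φ_d in the rational function (X^k-1)^k / ∏_{m=1}^k (X^m-1) equals μ_k(d) = k·[d∣k] − ⌊k/d⌋. -/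
/-!
Over ℚ, `X ^ m - 1` is separable and equals `∏_{i ∣ m} Φ_i`, the `Φ_i` being pairwise coprime
irreducibles; hence `Φ_d` occurs in it with multiplicity `[d ∣ m]`. Multiplicity at a prime is
additive, so `∏_{m=1}^k (X ^ m - 1)` has multiplicity `#{m ≤ k | d ∣ m} = ⌊k/d⌋` and
`(X ^ k - 1) ^ k` has multiplicity `k·[d ∣ k]`.
-/

open Polynomial

theorem cyclotomic_dvd_X_pow_sub_one_iff {d m : ℕ} (hd : d ≠ 0) (hm : m ≠ 0) :
    cyclotomic d ℚ ∣ (X : ℚ[X]) ^ m - 1 ↔ d ∣ m := by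
  refine ⟨fun h ↦ ?_, fun ⟨c, hc⟩ ↦ ?_⟩
  · have hp : Prime (cyclotomic d ℚ) := (cyclotomic.irreducible_rat (by omega)).prime
    rw [← prod_cyclotomic_eq_X_pow_sub_one (by omega) ℚ] at h
    obtain ⟨i, hi, hdi⟩ := hp.exists_mem_finset_dvd h
    obtain rfl : i = d := by
      by_contra hid
      exact hp.not_isUnit ((cyclotomic.isCoprime_rat hid).symm.isUnit_of_dvd' dvd_rfl hdi)
    exact Nat.dvd_of_mem_divisors hi
  · subst hc
    exact (cyclotomic.dvd_X_pow_sub_one d ℚ).trans (by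
      simpa [pow_mul] using sub_dvd_pow_sub_pow ((X : ℚ[X]) ^ d) 1 c)

theorem emultiplicity_cyclotomic_X_pow_sub_one {d m : ℕ} (hd : d ≠ 0) (hm : m ≠ 0) :
    emultiplicity (cyclotomic d ℚ) ((X : ℚ[X]) ^ m - 1) = if d ∣ m then 1 else 0 := by
  split_ifs with hdm
  · refine le_antisymm (emultiplicity_le_one_of_separable
      (cyclotomic.irreducible_rat (by omega)).not_isUnit ?_) ?_
    · exact X_pow_sub_one_separable_iff.mpr (by exact_mod_cast hm)
    · exact_mod_cast le_emultiplicity_of_pow_dvd (by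
        simpa using (cyclotomic_dvd_X_pow_sub_one_iff hd hm).mpr hdm)
  · exact emultiplicity_eq_zero.mpr (mt (cyclotomic_dvd_X_pow_sub_one_iff hd hm).mp hdm)

theorem emultiplicity_cyclotomic_prod_X_pow_sub_one {d : ℕ} (hd : d ≠ 0) (k : ℕ) :
    emultiplicity (cyclotomic d ℚ) (∏ m ∈ Finset.Icc 1 k, ((X : ℚ[X]) ^ m - 1)) = (k / d : ℕ) := by
  rw [Finset.emultiplicity_prod (cyclotomic.irreducible_rat (by omega)).prime,
    Finset.sum_congr rfl fun m hm ↦ emultiplicity_cyclotomic_X_pow_sub_one hd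
      (by simp at hm; omega), Finset.sum_boole, ← Nat.Ioc_filter_dvd_card_eq_div]
  rfl

theorem emultiplicity_cyclotomic_X_pow_sub_one_pow_self {d : ℕ} (hd : d ≠ 0) (k : ℕ) :
    emultiplicity (cyclotomic d ℚ) (((X : ℚ[X]) ^ k - 1) ^ k) = (if d ∣ k then k else 0 : ℕ) := by
  have hp : Prime (cyclotomic d ℚ) := (cyclotomic.irreducible_rat (by omega)).prime
  rcases eq_or_ne k 0 with rfl | hk
  · simpa using emultiplicity_of_one_right hp.not_isUnit
  · rw [emultiplicity_pow hp, emultiplicity_cyclotomic_X_pow_sub_one hd hk]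
    split_ifs <;> simp

theorem stmt1_general (k d : ℕ) (hd : 1 ≤ d) :
    -- multiplicity of Φ_d in ∏_{m=1}^k (X^m - 1) is exactly ⌊k/d⌋
    ((cyclotomic d ℚ) ^ (k / d) ∣ ∏ m ∈ Finset.Icc 1 k, ((X : ℚ[X]) ^ m - 1) ∧
      ¬ (cyclotomic d ℚ) ^ (k / d + 1) ∣ ∏ m ∈ Finset.Icc 1 k, ((X : ℚ[X]) ^ m - 1)) ∧
    -- multiplicity of Φ_d in (X^k - 1)^k is k if d ∣ k and 0 otherwise
    ((cyclotomic d ℚ) ^ (if d ∣ k then k else 0) ∣ ((X : ℚ[X]) ^ k - 1) ^ k ∧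
      ¬ (cyclotomic d ℚ) ^ ((if d ∣ k then k else 0) + 1) ∣ ((X : ℚ[X]) ^ k - 1) ^ k) ∧
    -- consequently, the net multiplicity equals μ_k(d) = k·[d∣k] − ⌊k/d⌋
    ((if d ∣ k then (k : ℤ) else 0) - ((k / d : ℕ) : ℤ) =
      (k : ℤ) * (if d ∣ k then 1 else 0) - ((k / d : ℕ) : ℤ)) := by
  have hd₀ : d ≠ 0 := by omega
  refine ⟨emultiplicity_eq_coe.mp (emultiplicity_cyclotomic_prod_X_pow_sub_one hd₀ k),
    emultiplicity_eq_coe.mp (emultiplicity_cyclotomic_X_pow_sub_one_pow_self hd₀ k), ?_⟩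
  split_ifs <;> simp

theorem stmt1 (k d : ℕ) (hk : 1 ≤ k) (hd : 1 ≤ d) :
    -- multiplicity of Φ_d in ∏_{m=1}^k (X^m - 1) is exactly ⌊k/d⌋
    ((cyclotomic d ℚ) ^ (k / d) ∣ ∏ m ∈ Finset.Icc 1 k, ((X : ℚ[X]) ^ m - 1) ∧
      ¬ (cyclotomic d ℚ) ^ (k / d + 1) ∣ ∏ m ∈ Finset.Icc 1 k, ((X : ℚ[X]) ^ m - 1)) ∧
    -- multiplicity of Φ_d in (X^k - 1)^k is k if d ∣ k and 0 otherwise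
    ((cyclotomic d ℚ) ^ (if d ∣ k then k else 0) ∣ ((X : ℚ[X]) ^ k - 1) ^ k ∧
      ¬ (cyclotomic d ℚ) ^ ((if d ∣ k then k else 0) + 1) ∣ ((X : ℚ[X]) ^ k - 1) ^ k) ∧
    -- consequently, the net multiplicity equals μ_k(d) = k·[d∣k] − ⌊k/d⌋
    ((if d ∣ k then (k : ℤ) else 0) - ((k / d : ℕ) : ℤ) =
      (k : ℤ) * (if d ∣ k then 1 else 0) - ((k / d : ℕ) : ℤ)) :=
  stmt1_general k d hd
end

section
/- For every natural number n ≥ 1, the number of partitions of n satisfies the Durfee square decomposition p(n) = ∑_{k=1}^{⌊√n⌋} ∑_{j=0}^{n-k²} p_{≤k}(j) · p_{≤k}(n - k² - j), where p_{≤k}(m) is the number of partitions of m into parts each at most k. -/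
/-- `p_{≤k}(n)`: the number of partitions of `n` into parts each at most `k`. -/
def partitionsMax (n k : ℕ) : ℕ :=
  Fintype.card {p : n.Partition // ∀ i ∈ p.parts, i ≤ k}

/-!
The Durfee square of a partition is the largest square `k × k` contained in its Young diagram.
Outside it the diagram splits into the cells to the right of the square, lying in the first `k`
rows, and the cells below it, lying in the first `k` columns. Reflected in the diagonal, the
former is again a Young diagram whose rows have length at most `k`, as is the latter, and the
diagram is recovered from `k` and these two pieces. So the partitions of `n` with Durfee square
`k` and `j` cells to the right of it are counted by `p_{≤k}(j) p_{≤k}(n - k² - j)`, and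
`1 ≤ k ≤ ⌊√n⌋` because `k² ≤ n`.
-/

open Finset

namespace YoungDiagram

theorem card_cells_ofRowLens (w : List ℕ) (hw : w.SortedGE) :
    (ofRowLens w hw).cells.card = w.sum := by
  change (YoungDiagram.cellsOfRowLens w).card = w.sum
  clear hw
  induction w with
  | nil => rfl
  | cons x w ih =>
    rw [YoungDiagram.cellsOfRowLens, card_union_of_disjoint, card_product, card_map, ih]
    · simp
    · simp [Finset.disjoint_left]

theorem card_cells_eq_sum_rowLens (μ : YoungDiagram) : μ.cells.card = μ.rowLens.sum := by
  conv_lhs => rw [← ofRowLens_to_rowLens_eq_self (μ := μ)]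
  exact card_cells_ofRowLens _ _

theorem forall_mem_ofRowLens_snd_lt_iff {w : List ℕ} {hw : w.SortedGE} (hpos : ∀ x ∈ w, 0 < x)
    (k : ℕ) : (∀ c ∈ ofRowLens w hw, c.2 < k) ↔ ∀ x ∈ w, x ≤ k := by
  simp only [mem_ofRowLens]
  constructor
  · intro h x hx
    obtain ⟨i, hi, rfl⟩ := List.getElem_of_mem hx
    have := h (i, w[i] - 1) ⟨hi, Nat.sub_lt (hpos _ hx) Nat.one_pos⟩
    omega
  · rintro h ⟨i, j⟩ ⟨hi, hj⟩
    exact hj.trans_le (h _ (List.getElem_mem hi))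

def durfee (μ : YoungDiagram) : ℕ :=
  Nat.find (⟨μ.colLen 0, fun h => by
    simpa [mem_iff_lt_colLen] using μ.up_left_mem le_rfl (Nat.zero_le _) h⟩ :
      ∃ i, (i, i) ∉ μ)

theorem diag_mem_iff_lt_durfee {μ : YoungDiagram} {i : ℕ} : (i, i) ∈ μ ↔ i < μ.durfee := by
  rw [durfee, Nat.lt_find_iff]
  refine ⟨fun h j hj => not_not.2 (μ.up_left_mem hj hj h), fun h => not_not.1 (h i le_rfl)⟩

noncomputable def comap (μ : YoungDiagram) (f : ℕ × ℕ ↪ ℕ × ℕ) (hf : Monotone f) :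
    YoungDiagram where
  cells := μ.cells.preimage f f.injective.injOn
  isLowerSet _ _ h hb := by simpa using μ.isLowerSet (hf h) (by simpa using hb)

@[simp]
theorem mem_comap {μ : YoungDiagram} {f : ℕ × ℕ ↪ ℕ × ℕ} {hf : Monotone f} {c : ℕ × ℕ} :
    c ∈ μ.comap f hf ↔ f c ∈ μ := by
  simp [comap, ← mem_cells]

def armEmb (k : ℕ) : ℕ × ℕ ↪ ℕ × ℕ :=
  ⟨fun c => (c.2, c.1 + k), fun a b h => by simp only [Prod.mk.injEq] at h; ext <;> omega⟩

def legEmb (k : ℕ) : ℕ × ℕ ↪ ℕ × ℕ :=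
  ⟨fun c => (c.1 + k, c.2), fun a b h => by simp only [Prod.mk.injEq] at h; ext <;> omega⟩

@[simp] theorem armEmb_apply (k : ℕ) (c : ℕ × ℕ) : armEmb k c = (c.2, c.1 + k) := rfl

@[simp] theorem legEmb_apply (k : ℕ) (c : ℕ × ℕ) : legEmb k c = (c.1 + k, c.2) := rfl

theorem armEmb_monotone (k : ℕ) : Monotone (armEmb k) :=
  fun _ _ h => Prod.mk_le_mk.2 ⟨h.2, Nat.add_le_add_right h.1 k⟩

theorem legEmb_monotone (k : ℕ) : Monotone (legEmb k) :=
  fun _ _ h => Prod.mk_le_mk.2 ⟨Nat.add_le_add_right h.1 k, h.2⟩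

noncomputable def durfeeArm (μ : YoungDiagram) : YoungDiagram :=
  μ.comap (armEmb μ.durfee) (armEmb_monotone _)

noncomputable def durfeeLeg (μ : YoungDiagram) : YoungDiagram :=
  μ.comap (legEmb μ.durfee) (legEmb_monotone _)

@[simp] theorem mem_durfeeArm {μ : YoungDiagram} {c : ℕ × ℕ} :
    c ∈ μ.durfeeArm ↔ (c.2, c.1 + μ.durfee) ∈ μ := mem_comap

@[simp] theorem mem_durfeeLeg {μ : YoungDiagram} {c : ℕ × ℕ} :
    c ∈ μ.durfeeLeg ↔ (c.1 + μ.durfee, c.2) ∈ μ := mem_comap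

theorem snd_lt_durfee_of_mem_durfeeArm {μ : YoungDiagram} {c : ℕ × ℕ} (hc : c ∈ μ.durfeeArm) :
    c.2 < μ.durfee := by
  by_contra h
  rw [mem_durfeeArm] at hc
  exact (lt_irrefl μ.durfee) (diag_mem_iff_lt_durfee.1 (μ.up_left_mem (not_lt.1 h) (by omega) hc))

theorem snd_lt_durfee_of_mem_durfeeLeg {μ : YoungDiagram} {c : ℕ × ℕ} (hc : c ∈ μ.durfeeLeg) :
    c.2 < μ.durfee := by
  by_contra h
  rw [mem_durfeeLeg] at hc
  exact (lt_irrefl μ.durfee) (diag_mem_iff_lt_durfee.1 (μ.up_left_mem (by omega) (not_lt.1 h) hc))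

section ofDurfee

variable (k : ℕ) (A L : YoungDiagram)

def ofDurfeeCells : Finset (ℕ × ℕ) :=
  range k ×ˢ range k ∪ A.cells.map (armEmb k) ∪ L.cells.map (legEmb k)

variable {k A L}

theorem mem_ofDurfeeCells {c : ℕ × ℕ} : c ∈ ofDurfeeCells k A L ↔
    c.1 < k ∧ c.2 < k ∨ k ≤ c.2 ∧ (c.2 - k, c.1) ∈ A ∨ k ≤ c.1 ∧ (c.1 - k, c.2) ∈ L := by
  obtain ⟨i, j⟩ := c
  simp only [ofDurfeeCells, mem_union, mem_product, mem_range, mem_map, mem_cells, armEmb_apply,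
    legEmb_apply, Prod.exists, Prod.mk.injEq]
  constructor
  · rintro ((h | ⟨a, b, h, rfl, rfl⟩) | ⟨a, b, h, rfl, rfl⟩)
    · exact Or.inl h
    · exact Or.inr (Or.inl ⟨by omega, by simpa using h⟩)
    · exact Or.inr (Or.inr ⟨by omega, by simpa using h⟩)
  · rintro (h | ⟨hk, h⟩ | ⟨hk, h⟩)
    · exact Or.inl (Or.inl h)
    · exact Or.inl (Or.inr ⟨_, _, h, rfl, by omega⟩)
    · exact Or.inr ⟨_, _, h, by omega, rfl⟩

theorem card_ofDurfeeCells (hA : ∀ c ∈ A, c.2 < k) :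
    (ofDurfeeCells k A L).card = k ^ 2 + A.cells.card + L.cells.card := by
  rw [ofDurfeeCells, card_union_of_disjoint, card_union_of_disjoint, card_product, card_range,
    card_map, card_map, sq]
  · refine disjoint_left.2 fun c hc hc' => ?_
    obtain ⟨a, -, rfl⟩ := mem_map.1 hc'
    simp at hc
  · refine disjoint_left.2 fun c hc hc' => ?_
    obtain ⟨l, -, rfl⟩ := mem_map.1 hc'
    rcases mem_union.1 hc with h | h
    · simp at h
    · obtain ⟨a, ha, hal⟩ := mem_map.1 h
      have := hA a ha
      rw [armEmb_apply, legEmb_apply, Prod.ext_iff] at hal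
      omega

def ofDurfee (k : ℕ) (A L : YoungDiagram) (hA : ∀ c ∈ A, c.2 < k) (hL : ∀ c ∈ L, c.2 < k) :
    YoungDiagram where
  cells := ofDurfeeCells k A L
  isLowerSet := by
    rintro ⟨i, j⟩ ⟨i', j'⟩ ⟨hi : i' ≤ i, hj : j' ≤ j⟩ h
    simp only [mem_coe, mem_ofDurfeeCells] at h ⊢
    rcases h with h | ⟨hk, h⟩ | ⟨hk, h⟩
    · omega
    · have := hA _ h
      by_cases hj' : j' < k
      · omega
      · exact Or.inr (Or.inl ⟨by omega, A.up_left_mem (by omega) hi h⟩)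
    · have := hL _ h
      by_cases hi' : i' < k
      · omega
      · exact Or.inr (Or.inr ⟨by omega, L.up_left_mem (by omega) hj h⟩)

variable {hA : ∀ c ∈ A, c.2 < k} {hL : ∀ c ∈ L, c.2 < k}

theorem mem_ofDurfee {c : ℕ × ℕ} : c ∈ ofDurfee k A L hA hL ↔
    c.1 < k ∧ c.2 < k ∨ k ≤ c.2 ∧ (c.2 - k, c.1) ∈ A ∨ k ≤ c.1 ∧ (c.1 - k, c.2) ∈ L :=
  mem_ofDurfeeCells

theorem durfee_ofDurfee : (ofDurfee k A L hA hL).durfee = k := by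
  refine eq_of_forall_lt_iff fun i => ?_
  rw [← diag_mem_iff_lt_durfee, mem_ofDurfee]
  have hA' := fun h => hA (i - k, i) h
  have hL' := fun h => hL (i - k, i) h
  dsimp only at hA' hL'
  constructor
  · rintro (h | ⟨hk, h⟩ | ⟨hk, h⟩)
    · exact h.1
    · exact absurd (hA' h) (by omega)
    · exact absurd (hL' h) (by omega)
  · exact fun h => Or.inl ⟨h, h⟩

theorem durfeeArm_ofDurfee : (ofDurfee k A L hA hL).durfeeArm = A := by
  ext ⟨i, j⟩
  rw [mem_cells, mem_cells, mem_durfeeArm, durfee_ofDurfee, mem_ofDurfee]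
  have hL' := fun h => hL (j - k, i + k) h
  simp only [Nat.add_sub_cancel] at hL' ⊢
  constructor
  · rintro (h | ⟨-, h⟩ | ⟨-, h⟩)
    · omega
    · exact h
    · exact absurd (hL' h) (by omega)
  · exact fun h => Or.inr (Or.inl ⟨by omega, h⟩)

theorem durfeeLeg_ofDurfee : (ofDurfee k A L hA hL).durfeeLeg = L := by
  ext ⟨i, j⟩
  rw [mem_cells, mem_cells, mem_durfeeLeg, durfee_ofDurfee, mem_ofDurfee]
  have hA' := fun h => hA (j - k, i + k) h
  simp only [Nat.add_sub_cancel] at hA' ⊢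
  constructor
  · rintro (h | ⟨-, h⟩ | ⟨-, h⟩)
    · omega
    · exact absurd (hA' h) (by omega)
    · exact h
  · exact fun h => Or.inr (Or.inr ⟨by omega, h⟩)

theorem card_cells_ofDurfee :
    (ofDurfee k A L hA hL).cells.card = k ^ 2 + A.cells.card + L.cells.card :=
  card_ofDurfeeCells hA

end ofDurfee

theorem ofDurfee_durfeeArm_durfeeLeg (μ : YoungDiagram) :
    ofDurfee μ.durfee μ.durfeeArm μ.durfeeLeg (fun _ => snd_lt_durfee_of_mem_durfeeArm)
      (fun _ => snd_lt_durfee_of_mem_durfeeLeg) = μ := by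
  ext ⟨i, j⟩
  rw [mem_cells, mem_cells, mem_ofDurfee, mem_durfeeArm, mem_durfeeLeg]
  dsimp only
  constructor
  · rintro (h | ⟨hk, h⟩ | ⟨hk, h⟩)
    · exact μ.up_left_mem (le_max_left i j) (le_max_right i j)
        (diag_mem_iff_lt_durfee.2 (max_lt h.1 h.2))
    · rwa [Nat.sub_add_cancel hk] at h
    · rwa [Nat.sub_add_cancel hk] at h
  · intro h
    by_cases hj : μ.durfee ≤ j
    · exact Or.inr (Or.inl ⟨hj, by rwa [Nat.sub_add_cancel hj]⟩)
    by_cases hi : μ.durfee ≤ i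
    · exact Or.inr (Or.inr ⟨hi, by rwa [Nat.sub_add_cancel hi]⟩)
    · exact Or.inl ⟨by omega, by omega⟩

theorem card_cells_eq_durfee (μ : YoungDiagram) :
    μ.cells.card = μ.durfee ^ 2 + μ.durfeeArm.cells.card + μ.durfeeLeg.cells.card := by
  conv_lhs => rw [← ofDurfee_durfeeArm_durfeeLeg μ]
  exact card_cells_ofDurfee

theorem durfee_mem_Icc_sqrt {μ : YoungDiagram} (h : μ.cells.Nonempty) :
    μ.durfee ∈ Icc 1 μ.cells.card.sqrt := by
  obtain ⟨c, hc⟩ := h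
  have hpos := diag_mem_iff_lt_durfee.1 (μ.up_left_mem (Nat.zero_le c.1) (Nat.zero_le c.2) hc)
  have := card_cells_eq_durfee μ
  rw [mem_Icc, Nat.le_sqrt']
  omega

theorem card_durfeeArm_lt (μ : YoungDiagram) :
    μ.durfeeArm.cells.card < μ.cells.card - μ.durfee ^ 2 + 1 := by
  have := card_cells_eq_durfee μ
  omega

noncomputable def durfeeFiberEquiv (k j m : ℕ) :
    {μ : YoungDiagram //
        μ.durfee = k ∧ μ.durfeeArm.cells.card = j ∧ μ.durfeeLeg.cells.card = m} ≃
      {A : YoungDiagram // A.cells.card = j ∧ ∀ c ∈ A, c.2 < k} ×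
        {L : YoungDiagram // L.cells.card = m ∧ ∀ c ∈ L, c.2 < k} where
  toFun μ := (⟨μ.1.durfeeArm, μ.2.2.1, fun _ hc => μ.2.1 ▸ snd_lt_durfee_of_mem_durfeeArm hc⟩,
    ⟨μ.1.durfeeLeg, μ.2.2.2, fun _ hc => μ.2.1 ▸ snd_lt_durfee_of_mem_durfeeLeg hc⟩)
  invFun AL := ⟨ofDurfee k AL.1.1 AL.2.1 AL.1.2.2 AL.2.2.2, durfee_ofDurfee,
    by rw [durfeeArm_ofDurfee]; exact AL.1.2.1, by rw [durfeeLeg_ofDurfee]; exact AL.2.2.1⟩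
  left_inv := by
    rintro ⟨μ, rfl, -⟩
    exact Subtype.ext (ofDurfee_durfeeArm_durfeeLeg μ)
  right_inv AL := Prod.ext (Subtype.ext (durfeeArm_ofDurfee (hA := AL.1.2.2) (hL := AL.2.2.2)))
    (Subtype.ext (durfeeLeg_ofDurfee (hA := AL.1.2.2) (hL := AL.2.2.2)))

end YoungDiagram

open YoungDiagram in
def Nat.Partition.equivYoungDiagram (n : ℕ) :
    n.Partition ≃ {μ : YoungDiagram // μ.cells.card = n} where
  toFun p := ⟨ofRowLens (p.parts.sort (· ≥ ·)) (Multiset.pairwise_sort _ _).sortedGE, by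
    rw [card_cells_ofRowLens, ← Multiset.sum_coe, Multiset.sort_eq, p.parts_sum]⟩
  invFun μ := ⟨μ.1.rowLens, fun hi => μ.1.pos_of_mem_rowLens _ hi, by
    rw [Multiset.sum_coe, ← card_cells_eq_sum_rowLens, μ.2]⟩
  left_inv p := by
    ext1
    simp [rowLens_ofRowLens_eq_self (fun x hx => p.parts_pos (Multiset.mem_sort _ |>.1 hx))]
  right_inv μ := Subtype.ext <| by
    simp only [Multiset.coe_sort, List.mergeSort_eq_self _ μ.1.rowLens_sorted.pairwise,
      ofRowLens_to_rowLens_eq_self]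

namespace Nat.Partition

open YoungDiagram

theorem natCard_subtype_equivYoungDiagram (n : ℕ) (P : YoungDiagram → Prop) :
    Nat.card {p : n.Partition // P (equivYoungDiagram n p)} =
      Nat.card {μ : YoungDiagram // μ.cells.card = n ∧ P μ} :=
  Nat.card_congr (((equivYoungDiagram n).subtypeEquiv fun _ => Iff.rfl).trans
    (Equiv.subtypeSubtypeEquivSubtypeInter _ P))

end Nat.Partition

open YoungDiagram Nat.Partition

theorem partitionsMax_eq_natCard (n k : ℕ) :
    partitionsMax n k = Nat.card {μ : YoungDiagram // μ.cells.card = n ∧ ∀ c ∈ μ, c.2 < k} := by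
  rw [partitionsMax, ← Nat.card_eq_fintype_card, ← natCard_subtype_equivYoungDiagram]
  refine Nat.card_congr (Equiv.subtypeEquivRight fun p => ?_)
  rw [equivYoungDiagram, Equiv.coe_fn_mk,
    forall_mem_ofRowLens_snd_lt_iff (fun x hx => p.parts_pos ((Multiset.mem_sort _).1 hx))]
  simp only [Multiset.mem_sort]

theorem card_filter_durfee_eq {n k j : ℕ} (hkj : k ^ 2 + j ≤ n) :
    #{p : n.Partition | (equivYoungDiagram n p).1.durfee = k ∧
      (equivYoungDiagram n p).1.durfeeArm.cells.card = j} =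
      partitionsMax j k * partitionsMax (n - k ^ 2 - j) k := by
  rw [← Fintype.card_subtype, ← Nat.card_eq_fintype_card,
    natCard_subtype_equivYoungDiagram n fun μ => μ.durfee = k ∧ μ.durfeeArm.cells.card = j,
    partitionsMax_eq_natCard, partitionsMax_eq_natCard, ← Nat.card_prod,
    ← Nat.card_congr (durfeeFiberEquiv k j (n - k ^ 2 - j))]
  refine Nat.card_congr (Equiv.subtypeEquivRight fun μ => ?_)
  rw [card_cells_eq_durfee]
  constructor
  · rintro ⟨h, rfl, rfl⟩; exact ⟨rfl, rfl, by omega⟩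
  · rintro ⟨rfl, rfl, h⟩; exact ⟨by omega, rfl, rfl⟩

theorem stmt5 (n : ℕ) (hn : 1 ≤ n) :
    Fintype.card (Nat.Partition n) =
      ∑ k ∈ Finset.Icc 1 (Nat.sqrt n), ∑ j ∈ Finset.range (n - k ^ 2 + 1),
        partitionsMax j k * partitionsMax (n - k ^ 2 - j) k := by
  classical
  let E := equivYoungDiagram n
  rw [← card_univ, card_eq_sum_card_fiberwise (f := fun p => (E p).1.durfee) (t := Icc 1 n.sqrt)
    fun p _ => by
      simpa only [(E p).2, mem_coe] using durfee_mem_Icc_sqrt (card_pos.1 ((E p).2.trans_ge hn))]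
  refine sum_congr rfl fun k hk => ?_
  rw [card_eq_sum_card_fiberwise (f := fun p => (E p).1.durfeeArm.cells.card)
    (t := range (n - k ^ 2 + 1)) fun p hp => by
      simpa only [(E p).2, (mem_filter.1 (mem_coe.1 hp)).2, mem_coe, mem_range]
        using card_durfeeArm_lt (E p).1]
  refine sum_congr rfl fun j hj => ?_
  have hk : k ^ 2 ≤ n := Nat.le_sqrt'.1 (mem_Icc.1 hk).2
  rw [filter_filter, card_filter_durfee_eq (by rw [mem_range] at hj; omega)]
end

section
/- For every natural number n ≥ 1, the number of partitions of n satisfies Euler's pentagonal number recurrence: p(n) = ∑_{m=1}^{n} (-1)^{m+1} · ( p̃(n - m(3m-1)/2) + p̃(n - m(3m+1)/2) ), where p̃(x) = p(x) for x ≥ 0 and p̃(x) = 0 for x < 0 (the sum over integers, with the generalized pentagonal numbers g_m = m(3m∓1)/2). -/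
/-!
The partition generating function is `∑ p(n) Xⁿ = ∏ᵢ 1 / (1 - Xⁱ)`, and Euler's pentagonal number
theorem gives `∏ᵢ (1 - Xⁱ) = ∑_{k ∈ ℤ} (-1)ᵏ X^{k(3k-1)/2}`. Their product is `1`, so for `n ≥ 1`
the coefficient of `Xⁿ` in `(∑ p(n) Xⁿ) · ∑_k (-1)ᵏ X^{k(3k-1)/2}` vanishes; grouping the terms
for `k = m` and `k = -m` and isolating `k = 0` gives the recurrence.
-/

open Finset PowerSeries PowerSeries.WithPiTopology

theorem pentagonal_natCast (m : ℕ) : pentagonal m = m * (3 * m - 1) / 2 := by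
  have : ((m * (3 * m - 1) / 2 : ℕ) : ℤ) = m * (3 * m - 1) / 2 := by
    rcases m.eq_zero_or_pos with rfl | hm
    · rfl
    · push_cast [Nat.cast_sub (by omega : 1 ≤ 3 * m)]
      rfl
  rw [pentagonal_def, ← this, Int.toNat_natCast]

theorem pentagonal_neg_natCast (m : ℕ) : pentagonal (-m) = m * (3 * m + 1) / 2 := by
  rw [pentagonal_neg]
  exact_mod_cast Int.toNat_natCast _

namespace Nat.Partition

/-- `p(n - k)`, read as `0` when `k > n`. -/
def cardSub (n k : ℕ) : ℤ := if k ≤ n then Fintype.card (n - k).Partition else 0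

theorem cardSub_of_lt {n k : ℕ} (h : n < k) : cardSub n k = 0 := if_neg (by omega)

theorem hasProd_powerSeriesMk_card (R : Type*) [CommSemiring R] [TopologicalSpace R]
    [T2Space R] [IsTopologicalSemiring R] :
    HasProd (fun i ↦ ∑' j : ℕ, (X : R⟦X⟧) ^ ((i + 1) * j))
      (PowerSeries.mk fun n ↦ (Fintype.card n.Partition : R)) := by
  simpa [restricted] using hasProd_powerSeriesMk_card_restricted R (fun _ ↦ True)

theorem powerSeriesMk_card_mul_pentagonalSeries (R : Type*) [CommRing R] :
    PowerSeries.mk (fun n ↦ (Fintype.card n.Partition : R)) * pentagonalSeries R = 1 := by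
  -- the identity is algebraic: the discrete topology on `R` only serves to multiply infinite products
  let _ : TopologicalSpace R := ⊥
  have _ : DiscreteTopology R := ⟨rfl⟩
  have geom (i : ℕ) : (∑' j : ℕ, (X : R⟦X⟧) ^ ((i + 1) * j)) * (1 - X ^ (i + 1)) = 1 := by
    simp_rw [pow_mul]
    exact tsum_pow_mul_one_sub_of_constantCoeff_eq_zero (by simp)
  have h := (hasProd_powerSeriesMk_card R).mul (hasProd_one_sub_X_pow R)
  simp only [geom] at h
  exact h.unique hasProd_one

theorem hasSum_negOnePow_mul_cardSub_pentagonal {n : ℕ} (hn : n ≠ 0) :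
    HasSum (fun k : ℤ ↦ (k.negOnePow : ℤ) * cardSub n (pentagonal k)) 0 := by
  have h := (hasSum_pentagonalSeries ℤ).mul_right
    (PowerSeries.mk fun n ↦ (Fintype.card n.Partition : ℤ))
  rw [mul_comm, powerSeriesMk_card_mul_pentagonalSeries, hasSum_iff_hasSum_coeff] at h
  simpa only [← map_intCast (C (R := ℤ)), mul_assoc, coeff_C_mul, coeff_X_pow_mul', coeff_mk,
    coeff_one, hn, if_false, Int.cast_id, cardSub] using h n

theorem hasSum_neg_one_pow_mul_cardSub_add_cardSub {n : ℕ} (hn : n ≠ 0) :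
    HasSum (fun m : ℕ ↦ (-1 : ℤ) ^ m *
      (cardSub n (m * (3 * m - 1) / 2) + cardSub n (m * (3 * m + 1) / 2)))
      (Fintype.card n.Partition) := by
  convert (hasSum_negOnePow_mul_cardSub_pentagonal hn).nat_add_neg using 1
  · ext m
    rw [Int.negOnePow_neg, Int.coe_negOnePow_natCast, pentagonal_natCast, pentagonal_neg_natCast,
      mul_add]
  · simp [cardSub, pentagonal_def]

end Nat.Partition

open Nat.Partition

theorem stmt6 (n : ℕ) (hn : 1 ≤ n) :
    (Fintype.card (Nat.Partition n) : ℤ) =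
      ∑ m ∈ Finset.Icc 1 n, (-1 : ℤ) ^ (m + 1) *
        ((if m * (3 * m - 1) / 2 ≤ n then
            (Fintype.card (Nat.Partition (n - m * (3 * m - 1) / 2)) : ℤ) else 0) +
         (if m * (3 * m + 1) / 2 ≤ n then
            (Fintype.card (Nat.Partition (n - m * (3 * m + 1) / 2)) : ℤ) else 0)) := by
  have h := (hasSum_neg_one_pow_mul_cardSub_add_cardSub (n := n) (by omega)).tsum_eq
  rw [tsum_eq_sum (s := insert 0 (Icc 1 n)), sum_insert (by simp)] at h
  · simp only [pow_succ, mul_neg_one, neg_mul, sum_neg_distrib]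
    simp only [cardSub, zero_mul, Nat.zero_div, zero_le, if_true, Nat.sub_zero, pow_zero,
      one_mul] at h
    linarith
  · intro m hm
    have hnm : n < m := by simp at hm; omega
    have h₁ : m * 2 ≤ m * (3 * m - 1) := Nat.mul_le_mul_left m (by omega)
    have h₂ : m * 2 ≤ m * (3 * m + 1) := Nat.mul_le_mul_left m (by omega)
    rw [cardSub_of_lt (by omega), cardSub_of_lt (by omega), add_zero, mul_zero]
end

section
/- Let N and n be natural numbers with n ≤ N. Then the coefficient of X^n in the polynomial ∏_{i=1}^N (1 - X^i) ∈ ℤ[X] equals (-1)^m if there exists an integer m with n = m(3m-1)/2, and equals 0 otherwise. (Such an integer m, ranging over ℤ, is unique when it exists, and m(3m-1)/2 for m ∈ ℤ enumerates all generalized pentagonal numbers.) -/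
/-!
Euler's pentagonal number theorem, `PowerSeries.coeff_prod_one_sub_X_pow_eventually_eq`, says that
each coefficient of the partial products of `∏ (1 - X ^ (i + 1))` is eventually that of
`pentagonalSeries`. The factors with `i ≥ N` are `≡ 1 mod X ^ (N + 1)`, so they leave the
coefficients of degree `≤ N` unchanged: the partial product over `range N` already has its final
coefficients there.
-/

namespace PowerSeries

variable {R : Type*} [CommRing R]

theorem coeff_mul_eq_of_X_pow_dvd_sub_one {n : ℕ} (p : R⟦X⟧) {q : R⟦X⟧}
    (hq : X ^ (n + 1) ∣ q - 1) : coeff n (p * q) = coeff n p := by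
  have hdvd : X ^ (n + 1) ∣ p * q - p := by simpa [mul_sub] using hq.mul_left p
  rw [← sub_eq_zero, ← map_sub]
  exact X_pow_dvd_iff.mp hdvd n n.lt_succ_self

theorem X_pow_dvd_prod_one_sub_X_pow_sub_one {N : ℕ} {s : Finset ℕ} (hs : ∀ i ∈ s, N ≤ i) :
    X ^ (N + 1) ∣ ∏ i ∈ s, (1 - X ^ (i + 1) : R⟦X⟧) - 1 := by
  induction s using Finset.induction_on with
  | empty => simp
  | insert j s hj ih =>
    have hXj : X ^ (N + 1) ∣ (X ^ (j + 1) : R⟦X⟧) :=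
      pow_dvd_pow X (by simpa using hs j (Finset.mem_insert_self j s))
    have ih' := ih fun i hi => hs i (Finset.mem_insert_of_mem hi)
    rw [Finset.prod_insert hj]
    convert dvd_sub ih' (hXj.mul_right (∏ i ∈ s, (1 - X ^ (i + 1) : R⟦X⟧))) using 1
    ring

theorem coeff_prod_range_one_sub_X_pow {N n : ℕ} (hn : n ≤ N) :
    coeff n (∏ i ∈ Finset.range N, (1 - X ^ (i + 1) : R⟦X⟧)) =
      coeff n (pentagonalSeries R) := by
  obtain ⟨s, hs⟩ := Filter.eventually_atTop.mp (coeff_prod_one_sub_X_pow_eventually_eq R n)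
  rw [← hs (Finset.range N ∪ s) Finset.subset_union_right, ← Finset.union_sdiff_self_eq_union,
    Finset.prod_union Finset.disjoint_sdiff, coeff_mul_eq_of_X_pow_dvd_sub_one]
  refine (pow_dvd_pow X (by omega : n + 1 ≤ N + 1)).trans
    (X_pow_dvd_prod_one_sub_X_pow_sub_one fun i hi => ?_)
  simpa using (Finset.mem_sdiff.mp hi).2

end PowerSeries

open Polynomial in
theorem Polynomial.coeff_prod_Icc_one_sub_X_pow {R : Type*} [CommRing R] {N n : ℕ} (hn : n ≤ N) :
    (∏ i ∈ Finset.Icc 1 N, (1 - X ^ i : R[X])).coeff n =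
      PowerSeries.coeff n (PowerSeries.pentagonalSeries R) := by
  rw [← PowerSeries.coeff_prod_range_one_sub_X_pow hn, ← coeff_coe,
    ← Finset.Ico_add_one_right_eq_Icc, Finset.prod_Ico_eq_prod_range,
    ← coeToPowerSeries.ringHom_apply, map_prod]
  simp [add_comm 1]

theorem pentagonal_eq_iff_two_mul_eq {m : ℤ} {n : ℕ} :
    pentagonal m = n ↔ 2 * (n : ℤ) = m * (3 * m - 1) := by
  rw [← two_mul_natCast_pentagonal, mul_right_inj' two_ne_zero, Nat.cast_inj, eq_comm]

theorem Int.coe_negOnePow_eq_neg_one_pow_natAbs (m : ℤ) :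
    (m.negOnePow : ℤ) = (-1) ^ m.natAbs := by
  rw [← Int.negOnePow_abs, Int.abs_eq_natAbs, Int.coe_negOnePow_natCast]

open Polynomial

theorem stmt7 (N n : ℕ) (hn : n ≤ N) :
    (∀ m : ℤ, 2 * (n : ℤ) = m * (3 * m - 1) →
      (∏ i ∈ Finset.Icc 1 N, (1 - (X : ℤ[X]) ^ i)).coeff n = (-1 : ℤ) ^ m.natAbs) ∧
    ((¬ ∃ m : ℤ, 2 * (n : ℤ) = m * (3 * m - 1)) →
      (∏ i ∈ Finset.Icc 1 N, (1 - (X : ℤ[X]) ^ i)).coeff n = 0) := by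
  rw [coeff_prod_Icc_one_sub_X_pow hn]
  refine ⟨fun m hm => ?_, fun hne => ?_⟩
  · rw [← pentagonal_eq_iff_two_mul_eq.mpr hm, PowerSeries.coeff_pentagonalSeries_pentagonal,
      Int.cast_id, Int.coe_negOnePow_eq_neg_one_pow_natAbs]
  · refine PowerSeries.coeff_pentagonalSeries_eq_zero ℤ fun ⟨m, hm⟩ => hne ?_
    exact ⟨m, pentagonal_eq_iff_two_mul_eq.mp hm⟩
end

section
/- For every natural number n ≥ 1, the sum-of-divisors function satisfies σ(n) = n·p(n) - ∑_{k=1}^{n-1} σ(k)·p(n-k), as an identity of integers. -/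
open Finset

/-! Double counting: `n · p(n) = ∑_λ ∑_a a · c_a(λ)`, where `c_a(λ)` is the multiplicity of the
part `a` in `λ`. Writing `c_a(λ) = #{m | 1 ≤ m ≤ c_a(λ)}` turns this into a weighted count of
triples `(λ, a, m)`. For fixed `(a, m)`, removing `m` copies of `a` identifies the partitions `λ`
with `m ≤ c_a(λ)` with the partitions of `n - a m`, and grouping the pairs `(a, m)` by `k = a m`
produces `∑_k σ(k) p(n - k)`. -/

theorem Nat.sum_Icc_sum_divisorsAntidiagonal {M : Type*} [AddCommMonoid M] (n : ℕ)
    (f : ℕ → ℕ → M) :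
    ∑ k ∈ Icc 1 n, ∑ x ∈ k.divisorsAntidiagonal, f x.1 x.2 =
      ∑ a ∈ Icc 1 n, ∑ m ∈ Icc 1 (n / a), f a m := by
  rw [sum_sigma', sum_sigma']
  refine sum_bij' (fun x _ => ⟨x.2.1, x.2.2⟩) (fun y _ => ⟨y.1 * y.2, (y.1, y.2)⟩)
    ?_ ?_ ?_ (fun _ _ => rfl) (fun _ _ => rfl)
  · rintro ⟨k, a, m⟩ hx
    simp only [mem_sigma, mem_Icc, Nat.mem_divisorsAntidiagonal] at hx ⊢
    obtain ⟨⟨-, hkn⟩, rfl, hk⟩ := hx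
    have ha : 0 < a := Nat.pos_of_ne_zero (left_ne_zero_of_mul hk)
    have hm : 0 < m := Nat.pos_of_ne_zero (right_ne_zero_of_mul hk)
    exact ⟨⟨ha, (Nat.le_mul_of_pos_right a hm).trans hkn⟩, hm,
      (Nat.le_div_iff_mul_le ha).2 (by rwa [mul_comm])⟩
  · rintro ⟨a, m⟩ hy
    simp only [mem_sigma, mem_Icc, Nat.mem_divisorsAntidiagonal] at hy ⊢
    obtain ⟨⟨ha, -⟩, hm, hmn⟩ := hy
    have := (Nat.le_div_iff_mul_le ha).1 hmn
    exact ⟨⟨Nat.mul_pos ha hm, by rwa [mul_comm]⟩, trivial, (Nat.mul_pos ha hm).ne'⟩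
  · rintro ⟨k, a, m⟩ hx
    simp only [mem_sigma, Nat.mem_divisorsAntidiagonal] at hx
    rw [hx.2.1]

namespace Nat.Partition

variable {n : ℕ}

theorem mul_add_sum_sub_replicate (p : n.Partition) {a m : ℕ} (h : m ≤ p.parts.count a) :
    a * m + (p.parts - Multiset.replicate m a).sum = n := by
  have := congrArg Multiset.sum (add_tsub_cancel_of_le (Multiset.le_count_iff_replicate_le.mp h))
  rwa [Multiset.sum_add, Multiset.sum_replicate, smul_eq_mul, p.parts_sum, mul_comm] at this

theorem count_mul_le (p : n.Partition) (a : ℕ) : p.parts.count a * a ≤ n := by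
  have := p.mul_add_sum_sub_replicate le_rfl (a := a)
  rw [mul_comm]; omega

def removeReplicateEquiv {a m : ℕ} (ha : 1 ≤ a) (h : a * m ≤ n) :
    {p : n.Partition // m ≤ p.parts.count a} ≃ (n - a * m).Partition where
  toFun p :=
    ⟨p.1.parts - Multiset.replicate m a,
      fun hi => p.1.parts_pos (Multiset.mem_of_le tsub_le_self hi),
      by have := p.1.mul_add_sum_sub_replicate p.2; omega⟩
  invFun q :=
    ⟨⟨q.parts + Multiset.replicate m a, by grind [Multiset.eq_of_mem_replicate],
      by simp [q.parts_sum, Multiset.sum_replicate, mul_comm]; omega⟩, by simp⟩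
  left_inv p := Subtype.ext <| Partition.ext <|
    tsub_add_cancel_of_le (Multiset.le_count_iff_replicate_le.mp p.2)
  right_inv q := Partition.ext <| add_tsub_cancel_right _ _

theorem card_filter_le_count {a m : ℕ} (ha : 1 ≤ a) (h : a * m ≤ n) :
    #{p : n.Partition | m ≤ p.parts.count a} = Fintype.card (n - a * m).Partition := by
  rw [← Fintype.card_subtype]
  exact Fintype.card_congr (removeReplicateEquiv ha h)

theorem sum_count_mul (p : n.Partition) : ∑ a ∈ Icc 1 n, p.parts.count a * a = n := by
  have hsub : p.parts.toFinset ⊆ Icc 1 n := fun a ha => by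
    rw [Multiset.mem_toFinset] at ha
    exact mem_Icc.2 ⟨p.parts_pos ha, p.le_of_mem_parts ha⟩
  simpa [p.parts_sum] using (sum_multiset_count_of_subset p.parts _ hsub).symm

theorem sum_sum_ite_le_count (p : n.Partition) :
    ∑ a ∈ Icc 1 n, ∑ m ∈ Icc 1 (n / a), (if m ≤ p.parts.count a then a else 0) = n := by
  conv_rhs => rw [← p.sum_count_mul]
  refine sum_congr rfl fun a ha => ?_
  have hc : p.parts.count a ≤ n / a :=
    (Nat.le_div_iff_mul_le (mem_Icc.1 ha).1).2 (p.count_mul_le a)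
  rw [← sum_filter, sum_const, smul_eq_mul]
  congr 1
  rw [show {m ∈ Icc 1 (n / a) | m ≤ p.parts.count a} = Icc 1 (p.parts.count a) by
    ext m; simp only [mem_filter, mem_Icc]; omega]
  simp

theorem mul_card_eq_sum_sigma_mul_card (n : ℕ) :
    n * Fintype.card n.Partition =
      ∑ k ∈ Icc 1 n, ArithmeticFunction.sigma 1 k * Fintype.card (n - k).Partition := by
  calc n * Fintype.card n.Partition
      = ∑ p : n.Partition, ∑ a ∈ Icc 1 n, ∑ m ∈ Icc 1 (n / a),
          (if m ≤ p.parts.count a then a else 0) := by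
        simp [sum_sum_ite_le_count, mul_comm]
    _ = ∑ a ∈ Icc 1 n, ∑ m ∈ Icc 1 (n / a), a * #{p : n.Partition | m ≤ p.parts.count a} := by
        rw [sum_comm]
        refine sum_congr rfl fun a _ => ?_
        rw [sum_comm]
        refine sum_congr rfl fun m _ => ?_
        rw [← sum_filter, sum_const, smul_eq_mul, mul_comm]
    _ = ∑ k ∈ Icc 1 n, ∑ x ∈ k.divisorsAntidiagonal,
          x.1 * #{p : n.Partition | x.2 ≤ p.parts.count x.1} :=
        (Nat.sum_Icc_sum_divisorsAntidiagonal n fun a m => _).symm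
    _ = ∑ k ∈ Icc 1 n, ArithmeticFunction.sigma 1 k * Fintype.card (n - k).Partition := by
        refine sum_congr rfl fun k hk => ?_
        rw [ArithmeticFunction.sigma_one_apply, sum_mul,
          ← Nat.sum_divisorsAntidiagonal fun a _ => a * _]
        refine sum_congr rfl fun x hx => ?_
        obtain ⟨rfl, hk0⟩ := Nat.mem_divisorsAntidiagonal.1 hx
        rw [card_filter_le_count (Nat.pos_of_ne_zero (left_ne_zero_of_mul hk0)) (mem_Icc.1 hk).2]

end Nat.Partition

theorem stmt9 (n : ℕ) (hn : 1 ≤ n) :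
    ((ArithmeticFunction.sigma 1) n : ℤ) =
      (n : ℤ) * (Fintype.card (Nat.Partition n) : ℤ) -
        ∑ k ∈ Finset.Icc 1 (n - 1),
          ((ArithmeticFunction.sigma 1) k : ℤ) * (Fintype.card (Nat.Partition (n - k)) : ℤ) := by
  obtain ⟨n, rfl⟩ := Nat.exists_eq_add_of_le' hn
  have h := Nat.Partition.mul_card_eq_sum_sigma_mul_card (n + 1)
  rw [sum_Icc_succ_top (by omega), Nat.sub_self, Fintype.card_unique (α := Nat.Partition 0),
    mul_one] at h
  rw [Nat.add_sub_cancel, eq_sub_iff_add_eq']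
  exact_mod_cast h.symm
end

section
/- For every natural number n ≥ 1, define the n×n integer Toeplitz–Hessenberg matrix H_n whose entry in row r and column c (1-indexed, 1 ≤ r,c ≤ n) is: r·p(r) if c = 1; p(r-c+1) if 1 < c ≤ r; 1 if c = r+1; and 0 if c > r+1. Then σ(n) = (-1)^{n-1} · det(H_n). -/
/-!
Euler's recurrence `∑_{k=1}^n σ(k) p(n-k) = n p(n)` comes from adding up the parts of all
partitions of `n`: a part `d` occurs at least `j` times in exactly `p(n - dj)` partitions of `n`
(add or remove `j` copies of `d`), so `n p(n) = ∑_{d,j} d p(n - dj) = ∑_k σ(k) p(n-k)`.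

For a lower Hessenberg matrix with ones on the superdiagonal, deleting the last row and column `j`
leaves a matrix whose last column is a unit vector; expanding along it repeatedly shows that this
minor has the determinant `D_j` of the leading `j × j` block. Laplace expansion along the last row
therefore gives `D_{n+1} = ∑_j (-1)^(n+j) a_{n,j} D_j`, and for `H` this is Euler's recurrence
solved for `σ(n+1)`, up to the sign `(-1)^n`.
-/

/-- The `n × n` Toeplitz–Hessenberg matrix built from partition numbers: with
1-indexed row `r' = r+1` and column `c' = c+1`, the entry is `r'·p(r')` if `c' = 1`,
`p(r'-c'+1)` if `1 < c' ≤ r'`, `1` if `c' = r'+1`, and `0` if `c' > r'+1`. -/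
noncomputable def hessenbergH (n : ℕ) : Matrix (Fin n) (Fin n) ℤ :=
  fun r c =>
    if (c : ℕ) = 0 then ((r : ℕ) + 1 : ℤ) * (Fintype.card (Nat.Partition ((r : ℕ) + 1)) : ℤ)
    else if (c : ℕ) ≤ (r : ℕ) then (Fintype.card (Nat.Partition ((r : ℕ) - (c : ℕ) + 1)) : ℤ)
    else if (c : ℕ) = (r : ℕ) + 1 then 1
    else 0

open Finset Matrix

lemma Finset.sum_Icc_filter_dvd {M : Type*} [AddCommMonoid M] (f : ℕ → M) {d : ℕ} (hd : 0 < d)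
    (n : ℕ) : ∑ k ∈ Icc 1 n with d ∣ k, f k = ∑ j ∈ Icc 1 (n / d), f (d * j) := by
  refine (sum_nbij' (d * ·) (· / d) ?_ ?_ ?_ ?_ ?_).symm
  · intro j hj
    simp only [mem_filter, mem_Icc, Nat.le_div_iff_mul_le hd, dvd_mul_right, and_true] at hj ⊢
    exact ⟨Nat.mul_pos hd hj.1, by rw [mul_comm]; exact hj.2⟩
  · intro k hk
    simp only [mem_filter, mem_Icc, Nat.le_div_iff_mul_le hd] at hk ⊢
    exact ⟨by simpa using Nat.le_of_dvd hk.1.1 hk.2, (Nat.div_mul_cancel hk.2).le.trans hk.1.2⟩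
  · intro j _
    simp [hd.ne']
  · intro k hk
    simp only [mem_filter] at hk
    exact Nat.mul_div_cancel' hk.2
  · simp

lemma Finset.card_Icc_filter_le {m c : ℕ} (h : c ≤ m) : #{j ∈ Icc 1 m | j ≤ c} = c := by
  rw [show {j ∈ Icc 1 m | j ≤ c} = Icc 1 c by ext; simp; omega, Nat.card_Icc, Nat.add_sub_cancel]

namespace Nat.Partition

variable {n : ℕ}

lemma mul_count_le (l : n.Partition) (d : ℕ) : d * l.parts.count d ≤ n := by
  obtain ⟨u, hu⟩ := Multiset.le_iff_exists_add.1
    (Multiset.le_count_iff_replicate_le.1 (le_refl (l.parts.count d)))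
  have := congrArg Multiset.sum hu
  simp only [Multiset.sum_add, Multiset.sum_replicate, smul_eq_mul, l.parts_sum] at this
  lia

lemma sum_mul_count (l : n.Partition) : ∑ d ∈ Icc 1 n, d * l.parts.count d = n := by
  conv_rhs => rw [← l.parts_sum]
  rw [sum_multiset_count_of_subset l.parts (Icc 1 n)]
  · simp [mul_comm]
  · intro d hd
    rw [Multiset.mem_toFinset] at hd
    exact mem_Icc.2 ⟨l.parts_pos hd, l.le_of_mem_parts hd⟩

def addReplicateEquiv {d j : ℕ} (hd : 0 < d) (h : d * j ≤ n) :
    (n - d * j).Partition ≃ {l : n.Partition // j ≤ l.parts.count d} where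
  toFun μ := ⟨⟨μ.parts + .replicate j d, by grind [Multiset.mem_replicate],
    by simp [μ.parts_sum, mul_comm j d, Nat.sub_add_cancel h]⟩, by simp⟩
  invFun l := ⟨l.1.parts - .replicate j d,
    fun hi => l.1.parts_pos (Multiset.mem_of_le (Multiset.sub_le_self _ _) hi), by
      have := congrArg Multiset.sum
        (tsub_add_cancel_of_le (Multiset.le_count_iff_replicate_le.1 l.2))
      simp only [Multiset.sum_add, Multiset.sum_replicate, smul_eq_mul, l.1.parts_sum] at this
      lia⟩
  left_inv μ := by ext1; simp
  right_inv l := by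
    ext1; ext1
    simp [tsub_add_cancel_of_le (Multiset.le_count_iff_replicate_le.1 l.2)]

lemma card_filter_le_count_s10 {d j : ℕ} (hd : 0 < d) (h : d * j ≤ n) :
    #{l : n.Partition | j ≤ l.parts.count d} = Fintype.card (n - d * j).Partition := by
  rw [← Fintype.card_subtype, Fintype.card_congr (addReplicateEquiv hd h)]

lemma sum_card_filter_le_count (d : ℕ) (hd : 0 < d) :
    ∑ j ∈ Icc 1 (n / d), #{l : n.Partition | j ≤ l.parts.count d} =
      ∑ l : n.Partition, l.parts.count d := by
  simp_rw [card_eq_sum_ones, sum_filter]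
  rw [sum_comm]
  refine sum_congr rfl fun l _ => ?_
  rw [← sum_filter, ← card_eq_sum_ones, card_Icc_filter_le]
  rw [Nat.le_div_iff_mul_le hd, mul_comm]
  exact l.mul_count_le d

theorem sum_sigma_mul_card (n : ℕ) :
    ∑ k ∈ Icc 1 n, ArithmeticFunction.sigma 1 k * Fintype.card (n - k).Partition =
      n * Fintype.card n.Partition := by
  calc ∑ k ∈ Icc 1 n, ArithmeticFunction.sigma 1 k * Fintype.card (n - k).Partition
      = ∑ k ∈ Icc 1 n, ∑ d ∈ k.divisors, d * Fintype.card (n - k).Partition := by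
        simp [ArithmeticFunction.sigma_one_apply, sum_mul]
    _ = ∑ d ∈ Icc 1 n, ∑ k ∈ Icc 1 n with d ∣ k, d * Fintype.card (n - k).Partition := by
        refine sum_comm' fun k d => ?_
        simp only [mem_Icc, mem_filter, Nat.mem_divisors]
        constructor
        · rintro ⟨hk, hdk, -⟩
          exact ⟨⟨hk, hdk⟩, Nat.pos_of_dvd_of_pos hdk hk.1, (Nat.le_of_dvd hk.1 hdk).trans hk.2⟩
        · rintro ⟨⟨hk, hdk⟩, -⟩
          exact ⟨hk, hdk, by omega⟩
    _ = ∑ d ∈ Icc 1 n, d * ∑ j ∈ Icc 1 (n / d), Fintype.card (n - d * j).Partition := by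
        refine sum_congr rfl fun d hd => ?_
        rw [sum_Icc_filter_dvd _ (mem_Icc.1 hd).1, mul_sum]
    _ = ∑ d ∈ Icc 1 n, d * ∑ j ∈ Icc 1 (n / d), #{l : n.Partition | j ≤ l.parts.count d} := by
        refine sum_congr rfl fun d hd => congrArg (d * ·) (sum_congr rfl fun j hj => ?_)
        rw [card_filter_le_count_s10 (mem_Icc.1 hd).1
          (mul_comm j d ▸ Nat.mul_le_of_le_div d j n (mem_Icc.1 hj).2)]
    _ = ∑ d ∈ Icc 1 n, d * ∑ l : n.Partition, l.parts.count d :=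
        sum_congr rfl fun d hd => by rw [sum_card_filter_le_count d (mem_Icc.1 hd).1]
    _ = ∑ l : n.Partition, ∑ d ∈ Icc 1 n, d * l.parts.count d := by
        simp_rw [mul_sum]
        exact sum_comm
    _ = n * Fintype.card n.Partition := by simp [sum_mul_count, mul_comm]

end Nat.Partition

section Hessenberg

variable {R : Type*} [CommRing R]

def unitHessenberg (a : ℕ → ℕ → R) (n : ℕ) : Matrix (Fin n) (Fin n) R :=
  Matrix.of fun r c => if (c : ℕ) ≤ r then a r c else if (c : ℕ) = r + 1 then 1 else 0

variable (a : ℕ → ℕ → R)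

lemma unitHessenberg_apply {n : ℕ} (r c : Fin n) :
    unitHessenberg a n r c = if (c : ℕ) ≤ r then a r c else if (c : ℕ) = r + 1 then 1 else 0 :=
  rfl

@[simp]
lemma unitHessenberg_submatrix_castSucc (n : ℕ) :
    (unitHessenberg a (n + 1)).submatrix Fin.castSucc Fin.castSucc = unitHessenberg a n := by
  ext; simp [unitHessenberg_apply]

lemma det_unitHessenberg_submatrix_succAbove (m : ℕ) (j : Fin (m + 1)) :
    ((unitHessenberg a (m + 1)).submatrix Fin.castSucc j.succAbove).det =
      (unitHessenberg a j).det := by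
  induction m with
  | zero => rw [Fin.fin_one_eq_zero j]; simp
  | succ m ih =>
    induction j using Fin.lastCases with
    | last => simp
    | cast j =>
      have hlast : (Fin.castSucc j).succAbove (Fin.last m) = Fin.last (m + 1) :=
        Fin.succAbove_castSucc_of_le _ _ (Fin.le_last j)
      rw [det_succ_column _ (Fin.last m), sum_eq_single (Fin.last m)]
      · have hminor : ((unitHessenberg a (m + 2)).submatrix Fin.castSucc
            j.castSucc.succAbove).submatrix (Fin.last m).succAbove (Fin.last m).succAbove =
            (unitHessenberg a (m + 1)).submatrix Fin.castSucc j.succAbove := by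
          ext; simp [unitHessenberg_apply]
        rw [hminor, ih j]
        simp [hlast, unitHessenberg_apply, ← two_mul]
      · intro i _ hi
        have him : (i : ℕ) ≠ m := fun h => hi (Fin.ext h)
        simp [hlast, unitHessenberg_apply, not_lt.2 i.is_le, him.symm]
      · simp

lemma det_unitHessenberg_succ (m : ℕ) :
    (unitHessenberg a (m + 1)).det =
      ∑ j : Fin (m + 1), (-1) ^ (m + (j : ℕ)) * a m j * (unitHessenberg a j).det := by
  rw [det_succ_row _ (Fin.last m)]
  refine sum_congr rfl fun j _ => ?_
  simp [det_unitHessenberg_submatrix_succAbove, unitHessenberg_apply, j.is_le]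

def toeplitzHessenberg (q p : ℕ → R) (n : ℕ) : Matrix (Fin n) (Fin n) R :=
  unitHessenberg (fun r c => if c = 0 then q (r + 1) else p (r - c + 1)) n

lemma det_toeplitzHessenberg_succ (q p : ℕ → R) (n : ℕ) :
    (toeplitzHessenberg q p (n + 1)).det = ∑ j : Fin (n + 1), (-1) ^ (n + (j : ℕ)) *
      (if (j : ℕ) = 0 then q (n + 1) else p (n - j + 1)) * (toeplitzHessenberg q p j).det :=
  det_unitHessenberg_succ _ n

theorem det_toeplitzHessenberg {p q s : ℕ → R} (hp : p 0 = 1)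
    (hs : ∀ n, ∑ k ∈ Icc 1 n, s k * p (n - k) = q n) (n : ℕ) :
    (toeplitzHessenberg q p (n + 1)).det = (-1) ^ n * s (n + 1) := by
  induction n using Nat.strong_induction_on with
  | _ n ih =>
  have hq : q (n + 1) = ∑ i ∈ range n, s (i + 1) * p (n - i) + s (n + 1) := by
    rw [← hs, ← Ico_add_one_right_eq_Icc, sum_Ico_eq_sum_range, Nat.add_sub_cancel,
      sum_range_succ]
    simp [hp, add_comm 1]
  have hterm : ∀ i ∈ range n, (-1) ^ (n + (i + 1)) *
      (if i + 1 = 0 then q (n + 1) else p (n - (i + 1) + 1)) *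
      (toeplitzHessenberg q p (i + 1)).det = -((-1) ^ n * (s (i + 1) * p (n - i))) := by
    intro i hi
    have hsign : (-1 : R) ^ (n + (i + 1)) * (-1) ^ i = -(-1) ^ n := by
      rw [← pow_add, show n + (i + 1) + i = n + 1 + (i + i) by ring, pow_add,
        Even.neg_one_pow ⟨i, rfl⟩]
      ring
    rw [if_neg i.succ_ne_zero, ih i (mem_range.1 hi), show n - (i + 1) + 1 = n - i by grind]
    linear_combination s (i + 1) * p (n - i) * hsign
  rw [det_toeplitzHessenberg_succ, Fin.sum_univ_eq_sum_range (fun j => (-1) ^ (n + j) *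
      (if j = 0 then q (n + 1) else p (n - j + 1)) * (toeplitzHessenberg q p j).det),
    sum_range_succ', sum_congr rfl hterm, sum_neg_distrib, ← mul_sum, hq]
  simp only [if_true, det_fin_zero]
  ring

end Hessenberg

lemma hessenbergH_eq_toeplitzHessenberg (n : ℕ) :
    hessenbergH n = toeplitzHessenberg (fun k => (k * Fintype.card k.Partition : ℤ))
      (fun k => (Fintype.card k.Partition : ℤ)) n := by
  ext r c
  simp only [hessenbergH, toeplitzHessenberg, unitHessenberg_apply]
  split_ifs <;> first | omega | push_cast; rfl

theorem stmt10 (n : ℕ) (hn : 1 ≤ n) :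
    ((ArithmeticFunction.sigma 1) n : ℤ) = (-1 : ℤ) ^ (n - 1) * (hessenbergH n).det := by
  obtain ⟨m, rfl⟩ : ∃ m, n = m + 1 := ⟨n - 1, by omega⟩
  have euler (k : ℕ) : ∑ i ∈ Icc 1 k, (ArithmeticFunction.sigma 1 i : ℤ) *
      Fintype.card (k - i).Partition = k * Fintype.card k.Partition := by
    exact_mod_cast Nat.Partition.sum_sigma_mul_card k
  rw [hessenbergH_eq_toeplitzHessenberg, det_toeplitzHessenberg (by simp) euler,
    Nat.add_sub_cancel, ← mul_assoc, ← pow_add, Even.neg_one_pow ⟨m, rfl⟩, one_mul]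
end
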